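/- arXiv:2508.20639 — 2 statements merged into one kernel-verified Lean document; each statement's English description precedes it below -/
import Mathlib

section
/- For all integers m ≥ 1 and n ≥ 1, the Einstein system for B(m,n) admits at least two distinct real solutions (x₁, x₂, c) with x₁ ≠ 0 and x₂ ≠ 0. -/
/-!
The Killing form itself, `(x₁, x₂, c) = (1, 1, -1/4)`, is one solution. For a second one, put
`x₁ = t` and solve the cleared forms of (i) for `c` and of (iii) for `x₂`; then (ii) becomes a
quartic in `t` which vanishes at `t = 1`. Its remaining cubic factor takes the values
`-(m - n)(2m - 1)²` and `2m + 1 + 4n(m - n)` at `0` and `1`, which have opposite signs when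
`m ≠ n`, and it has the root `(2m - 1)/(2m)` when `m = n`. Either way it has a root in `(0, 1)`.
Throughout, `2m - 2n - 1` is odd, hence nonzero.
-/

open Set

def IsEinsteinSolution (m n : ℝ) (p : ℝ × ℝ × ℝ) : Prop :=
  p.1 ≠ 0 ∧ p.2.1 ≠ 0 ∧
    (1/4) * ((2 * n / (2 * m - 1)) * p.1^2 - 1) = p.2.2 * (1 - 2 * n / (2 * m - 1)) * p.1 ∧
    (1/4) * (((2 * m + 1) / (2 * n + 2)) * p.2.1^2 - 1)
      = p.2.2 * (1 - (2 * m + 1) / (2 * n + 2)) * p.2.1 ∧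
    (m / (2 * m - 2 * n - 1)) * p.1 - ((2 * n + 1) / (2 * (2 * m - 2 * n - 1))) * p.2.1
      = 2 * p.2.2 + 1

theorem isEinsteinSolution_one_one {m n : ℝ} (hK : 2 * m - 2 * n - 1 ≠ 0) :
    IsEinsteinSolution m n (1, 1, -1/4) := by
  have hK' : 2 * (m - n) - 1 ≠ 0 := by rwa [mul_sub] -- the form `field_simp` looks for
  refine ⟨one_ne_zero, one_ne_zero, by ring, by ring, ?_⟩
  field_simp
  ring

/-- Since `1 - 2n/(2m-1) = K/(2m-1)` and `1 - (2m+1)/(2n+2) = -K/(2n+2)` with `K = 2m - 2n - 1`,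
clearing denominators turns the system into these polynomial equations. -/
theorem isEinsteinSolution_of_cleared {m n x₁ x₂ c : ℝ} (hm : 2 * m - 1 ≠ 0) (hn : n + 1 ≠ 0)
    (hK : 2 * m - 2 * n - 1 ≠ 0)
    (h₁ : 2 * n * x₁ ^ 2 - (2 * m - 1) = 4 * (2 * m - 2 * n - 1) * c * x₁)
    (h₂ : (2 * m + 1) * x₂ ^ 2 - (2 * n + 2) = -4 * (2 * m - 2 * n - 1) * c * x₂)
    (h₃ : 2 * m * x₁ - (2 * n + 1) * x₂ = 2 * (2 * m - 2 * n - 1) * (2 * c + 1)) :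
    IsEinsteinSolution m n (x₁, x₂, c) := by
  have hK' : 2 * (m - n) - 1 ≠ 0 := by rwa [mul_sub]
  refine ⟨?_, ?_, ?_, ?_, ?_⟩
  · rintro rfl
    exact hm (by linear_combination -h₁)
  · rintro rfl
    exact hn (by linear_combination -h₂ / 2)
  · field_simp
    linear_combination h₁
  · field_simp
    linear_combination h₂
  · field_simp
    linear_combination h₃

/-- Solving (i) for `c` and (iii) for `x₂` in terms of `x₁ = t` turns (ii) into a quartic in `t`
vanishing at `t = 1`; this is its quotient by `2 (t - 1)`. -/
def einsteinCubic (m n t : ℝ) : ℝ :=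
  -(m - n) * (2 * m - 1) ^ 2
    + (1 + n - 4 * n ^ 2 - m + 8 * m * n + 8 * m * n ^ 2 - 8 * m ^ 2 - 20 * m ^ 2 * n
        + 12 * m ^ 3) * t
    + (-2 * n + 4 * n ^ 3 + 4 * m + 2 * m * n - 16 * m * n ^ 2 + 2 * m ^ 2 + 24 * m ^ 2 * n
        - 12 * m ^ 3) * t ^ 2
    + 2 * (m - n) * (2 * (m - n) ^ 2 + m * (2 * n + 1)) * t ^ 3

theorem einsteinCubic_zero (m n : ℝ) : einsteinCubic m n 0 = -(m - n) * (2 * m - 1) ^ 2 := by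
  simp [einsteinCubic]

theorem einsteinCubic_one (m n : ℝ) : einsteinCubic m n 1 = 2 * m + 1 + 4 * n * (m - n) := by
  simp only [einsteinCubic]
  ring

theorem einsteinCubic_self (m t : ℝ) :
    einsteinCubic m m t = (2 * m + 1) * t * (2 * m * t - (2 * m - 1)) := by
  simp only [einsteinCubic]
  ring

theorem exists_isEinsteinSolution_of_einsteinCubic_eq_zero {m n t : ℝ} (hm : 2 * m - 1 ≠ 0)
    (hn : 0 ≤ n) (hK : 2 * m - 2 * n - 1 ≠ 0) (ht : einsteinCubic m n t = 0) (ht₀ : t ≠ 0) :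
    ∃ x₂ c : ℝ, IsEinsteinSolution m n (t, x₂, c) := by
  have hD₀ : (2 * n + 1) * t ≠ 0 := mul_ne_zero (by linarith) ht₀
  obtain ⟨x₂, hx₂⟩ : ∃ x₂ : ℝ,
      (2 * n + 1) * t * x₂ = 2 * (m - n) * t ^ 2 - 2 * (2 * m - 2 * n - 1) * t + (2 * m - 1) :=
    ⟨_, mul_div_cancel₀ _ hD₀⟩
  obtain ⟨c, hc⟩ : ∃ c : ℝ, 4 * (2 * m - 2 * n - 1) * t * c = 2 * n * t ^ 2 - (2 * m - 1) :=
    ⟨_, mul_div_cancel₀ _ (mul_ne_zero (mul_ne_zero four_ne_zero hK) ht₀)⟩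
  have h₃ : 2 * m * t - (2 * n + 1) * x₂ = 2 * (2 * m - 2 * n - 1) * (2 * c + 1) := by
    refine mul_left_cancel₀ ht₀ ?_
    linear_combination -hx₂ - hc
  -- (ii) with `c` eliminated through (iii), times the square of the denominator of `x₂`
  have hconic : ((2 * n + 1) * t) ^ 2 * (2 * (m - n) * x₂ ^ 2 + 2 * m * t * x₂
      - 2 * (2 * m - 2 * n - 1) * x₂ - (2 * n + 2)) = 0 := by
    unfold einsteinCubic at ht
    linear_combination (2 * (m - n) * ((2 * n + 1) * t * x₂ + 2 * (m - n) * t ^ 2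
      - 2 * (2 * m - 2 * n - 1) * t + (2 * m - 1)) + (2 * m * t - 2 * (2 * m - 2 * n - 1))
      * (2 * n + 1) * t) * hx₂ + 2 * (t - 1) * ht
  have h₂ : (2 * m + 1) * x₂ ^ 2 - (2 * n + 2) = -4 * (2 * m - 2 * n - 1) * c * x₂ := by
    linear_combination (mul_eq_zero.mp hconic).resolve_left (pow_ne_zero 2 hD₀) - x₂ * h₃
  exact ⟨x₂, c, isEinsteinSolution_of_cleared hm (by linarith) hK (by linear_combination -hc) h₂ h₃⟩

theorem two_mul_sub_two_mul_sub_one_ne_zero (m n : ℕ) : (2 * m - 2 * n - 1 : ℝ) ≠ 0 := by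
  intro h
  have : (2 * m : ℤ) = 2 * n + 1 := by exact_mod_cast (by linarith : (2 * m : ℝ) = 2 * n + 1)
  omega

theorem exists_einsteinCubic_eq_zero {m n : ℕ} (hm : 1 ≤ m) :
    ∃ t ∈ Ioo (0 : ℝ) 1, einsteinCubic m n t = 0 := by
  have hm' : (1 : ℝ) ≤ m := by exact_mod_cast hm
  have hcont : ContinuousOn (einsteinCubic m n) (Icc 0 1) := by
    unfold einsteinCubic
    fun_prop
  rcases lt_trichotomy m n with hlt | rfl | hgt
  · have hlt' : (m : ℝ) + 1 ≤ n := by exact_mod_cast hlt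
    have h₀ : 0 < einsteinCubic m n 0 := by
      rw [einsteinCubic_zero]
      nlinarith
    have h₁ : einsteinCubic m n 1 < 0 := by
      rw [einsteinCubic_one]
      nlinarith
    simpa using intermediate_value_Ioo' zero_le_one hcont ⟨h₁, h₀⟩
  · refine ⟨(2 * m - 1) / (2 * m), ⟨div_pos (by linarith) (by linarith), ?_⟩, ?_⟩
    · rw [div_lt_one (by positivity)]
      linarith
    · rw [einsteinCubic_self]
      field_simp
      ring
  · have hgt' : (n : ℝ) + 1 ≤ m := by exact_mod_cast hgt
    have h₀ : einsteinCubic m n 0 < 0 := by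
      rw [einsteinCubic_zero]
      nlinarith
    have h₁ : 0 < einsteinCubic m n 1 := by
      rw [einsteinCubic_one]
      nlinarith
    simpa using intermediate_value_Ioo zero_le_one hcont ⟨h₀, h₁⟩

theorem einstein_Bmn_two_solutions_general (m n : ℕ) (hm : 1 ≤ m) :
    ∃ s t : ℝ × ℝ × ℝ, s ≠ t ∧
      (∀ p ∈ ({s, t} : Set (ℝ × ℝ × ℝ)),
        p.1 ≠ 0 ∧ p.2.1 ≠ 0 ∧
        (1/4) * ((2 * (n : ℝ) / (2 * (m : ℝ) - 1)) * p.1^2 - 1)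
          = p.2.2 * (1 - 2 * (n : ℝ) / (2 * (m : ℝ) - 1)) * p.1 ∧
        (1/4) * (((2 * (m : ℝ) + 1) / (2 * (n : ℝ) + 2)) * p.2.1^2 - 1)
          = p.2.2 * (1 - (2 * (m : ℝ) + 1) / (2 * (n : ℝ) + 2)) * p.2.1 ∧
        ((m : ℝ) / (2 * (m : ℝ) - 2 * (n : ℝ) - 1)) * p.1
          - ((2 * (n : ℝ) + 1) / (2 * (2 * (m : ℝ) - 2 * (n : ℝ) - 1))) * p.2.1
          = 2 * p.2.2 + 1) := by
  have hK := two_mul_sub_two_mul_sub_one_ne_zero m n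
  have hm' : (2 * m - 1 : ℝ) ≠ 0 := by
    have : (1 : ℝ) ≤ m := by exact_mod_cast hm
    linarith
  obtain ⟨t, ⟨ht₀, ht₁⟩, ht⟩ := exists_einsteinCubic_eq_zero (n := n) hm
  obtain ⟨x₂, c, hsol⟩ :=
    exists_isEinsteinSolution_of_einsteinCubic_eq_zero hm' n.cast_nonneg hK ht ht₀.ne'
  refine ⟨(1, 1, -1/4), (t, x₂, c), fun h => ht₁.ne' (congrArg Prod.fst h), ?_⟩
  simp only [mem_insert_iff, mem_singleton_iff, forall_eq_or_imp, forall_eq]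
  exact ⟨isEinsteinSolution_one_one hK, hsol⟩

/-- For all integers m ≥ 1 and n ≥ 1, the Einstein system for B(m,n) admits at
least two distinct real solutions (x₁, x₂, c) with x₁ ≠ 0 and x₂ ≠ 0. -/
theorem einstein_Bmn_two_solutions (m n : ℕ) (hm : 1 ≤ m) (hn : 1 ≤ n) :
    ∃ s t : ℝ × ℝ × ℝ, s ≠ t ∧
      (∀ p ∈ ({s, t} : Set (ℝ × ℝ × ℝ)),
        p.1 ≠ 0 ∧ p.2.1 ≠ 0 ∧
        (1/4) * ((2 * (n : ℝ) / (2 * (m : ℝ) - 1)) * p.1^2 - 1)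
          = p.2.2 * (1 - 2 * (n : ℝ) / (2 * (m : ℝ) - 1)) * p.1 ∧
        (1/4) * (((2 * (m : ℝ) + 1) / (2 * (n : ℝ) + 2)) * p.2.1^2 - 1)
          = p.2.2 * (1 - (2 * (m : ℝ) + 1) / (2 * (n : ℝ) + 2)) * p.2.1 ∧
        ((m : ℝ) / (2 * (m : ℝ) - 2 * (n : ℝ) - 1)) * p.1
          - ((2 * (n : ℝ) + 1) / (2 * (2 * (m : ℝ) - 2 * (n : ℝ) - 1))) * p.2.1
          = 2 * p.2.2 + 1) :=
  einstein_Bmn_two_solutions_general m n hm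
end

section
/- Let m ≥ 2 and n ≥ 1 be integers with m ≠ n + 1, and set A = 4m³ − 4(2n+1)m² + (8n² + 6n + 1)m − n(2n+1)², B = −12m³ + 4(6n+5)m² − (16n² + 22n + 7)m + n(4n² + 8n + 3), C = 2(m−1)(6m² − (10n+7)m + (2n+1)²), D = 2(m−1)²(2n − 2m + 1). Then for real numbers x₁, x₂, c with x₁ ≠ 0 and x₂ ≠ 0, the triple (x₁, x₂, c) solves the Einstein system for D(m,n) if and only if c = (n·x₁² − m + 1)/(4(m−n−1)·x₁), x₂ = ((2m−2n−1)·x₁² − 4(m−n−1)·x₁ + 2(m−1))/((2n+1)·x₁), and (x₁ − 1)·(A·x₁³ + B·x₁² + C·x₁ + D) = 0. -/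
/-!
Equation (i) is linear in `c` and, once `c` is eliminated, equation (iii) is linear in `x₂`.
Substituting both solutions into (ii) and clearing the denominator `((2n+1) x₁)²` leaves a
quartic in `x₁`, which vanishes at `x₁ = 1` (the Killing metric, `x₁ = x₂ = 1`) and so
factors as `(x₁ - 1)` times the cubic `A x₁³ + B x₁² + C x₁ + D`.
-/

section EinsteinSystem

variable {K : Type*} [Field K] {m n x₁ x₂ c : K}

theorem einstein_eq_one_iff [CharZero K] (hm : m - 1 ≠ 0) :
    1 / 4 * (n / (m - 1) * x₁ ^ 2 - 1) = c * (1 - n / (m - 1)) * x₁ ↔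
      c * (4 * (m - n - 1) * x₁) = n * x₁ ^ 2 - m + 1 := by
  field_simp
  constructor <;> intro h <;> linear_combination -h

theorem einstein_eq_two_iff [CharZero K] (hn : n + 1 ≠ 0) :
    1 / 4 * (m / (n + 1) * x₂ ^ 2 - 1) = c * (1 - m / (n + 1)) * x₂ ↔
      m * x₂ ^ 2 - (n + 1) + 4 * (m - n - 1) * c * x₂ = 0 := by
  field_simp
  constructor <;> intro h <;> linear_combination h

theorem einstein_eq_three_iff [CharZero K] (hmn : m - n - 1 ≠ 0) (hx₁ : x₁ ≠ 0)
    (hc : c * (4 * (m - n - 1) * x₁) = n * x₁ ^ 2 - m + 1) :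
    (2 * m - 1) / (4 * (m - n - 1)) * x₁ - (2 * n + 1) / (4 * (m - n - 1)) * x₂ = 2 * c + 1 ↔
      x₂ * ((2 * n + 1) * x₁)
        = (2 * m - 2 * n - 1) * x₁ ^ 2 - 4 * (m - n - 1) * x₁ + 2 * (m - 1) := by
  field_simp
  constructor <;> intro h
  · linear_combination -x₁ * h - 2 * hc
  · refine mul_left_cancel₀ hx₁ ?_
    linear_combination -h - 2 * hc

theorem einstein_eq_two_iff_quartic (hn : 2 * n + 1 ≠ 0) (hx₁ : x₁ ≠ 0)
    (hc : c * (4 * (m - n - 1) * x₁) = n * x₁ ^ 2 - m + 1)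
    (hx₂ : x₂ * ((2 * n + 1) * x₁)
      = (2 * m - 2 * n - 1) * x₁ ^ 2 - 4 * (m - n - 1) * x₁ + 2 * (m - 1)) :
    m * x₂ ^ 2 - (n + 1) + 4 * (m - n - 1) * c * x₂ = 0 ↔
      m * ((2 * m - 2 * n - 1) * x₁ ^ 2 - 4 * (m - n - 1) * x₁ + 2 * (m - 1)) ^ 2
        + (2 * n + 1) * (n * x₁ ^ 2 - m + 1)
          * ((2 * m - 2 * n - 1) * x₁ ^ 2 - 4 * (m - n - 1) * x₁ + 2 * (m - 1))
        - (n + 1) * (2 * n + 1) ^ 2 * x₁ ^ 2 = 0 := by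
  -- scaled by `((2n+1) x₁)²`, (ii) sees `x₂`, `c` only through the products fixed by `hx₂`, `hc`
  have key : ((2 * n + 1) * x₁) ^ 2 * (m * x₂ ^ 2 - (n + 1) + 4 * (m - n - 1) * c * x₂)
      = m * (x₂ * ((2 * n + 1) * x₁)) ^ 2
        + (2 * n + 1) * (c * (4 * (m - n - 1) * x₁)) * (x₂ * ((2 * n + 1) * x₁))
        - (n + 1) * (2 * n + 1) ^ 2 * x₁ ^ 2 := by
    ring
  rw [← hc, ← hx₂, ← key]
  simp [hn, hx₁]

end EinsteinSystem

theorem einstein_quartic_factorization {R : Type*} [CommRing R] (m n x : R) :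
    m * ((2 * m - 2 * n - 1) * x ^ 2 - 4 * (m - n - 1) * x + 2 * (m - 1)) ^ 2
        + (2 * n + 1) * (n * x ^ 2 - m + 1)
          * ((2 * m - 2 * n - 1) * x ^ 2 - 4 * (m - n - 1) * x + 2 * (m - 1))
        - (n + 1) * (2 * n + 1) ^ 2 * x ^ 2
      = (x - 1) * ((4 * m ^ 3 - 4 * (2 * n + 1) * m ^ 2 + (8 * n ^ 2 + 6 * n + 1) * m
            - n * (2 * n + 1) ^ 2) * x ^ 3
        + (-12 * m ^ 3 + 4 * (6 * n + 5) * m ^ 2 - (16 * n ^ 2 + 22 * n + 7) * m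
            + n * (4 * n ^ 2 + 8 * n + 3)) * x ^ 2
        + 2 * (m - 1) * (6 * m ^ 2 - (10 * n + 7) * m + (2 * n + 1) ^ 2) * x
        + 2 * (m - 1) ^ 2 * (2 * n - 2 * m + 1)) := by
  ring

theorem einstein_Dmn_reduction_general (m n : ℕ) (hm : 2 ≤ m) (hmn : m ≠ n + 1)
    (A B C D : ℝ)
    (hA : A = 4 * (m : ℝ)^3 - 4 * (2 * (n : ℝ) + 1) * (m : ℝ)^2
      + (8 * (n : ℝ)^2 + 6 * (n : ℝ) + 1) * (m : ℝ) - (n : ℝ) * (2 * (n : ℝ) + 1)^2)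
    (hB : B = -12 * (m : ℝ)^3 + 4 * (6 * (n : ℝ) + 5) * (m : ℝ)^2
      - (16 * (n : ℝ)^2 + 22 * (n : ℝ) + 7) * (m : ℝ)
      + (n : ℝ) * (4 * (n : ℝ)^2 + 8 * (n : ℝ) + 3))
    (hC : C = 2 * ((m : ℝ) - 1) * (6 * (m : ℝ)^2 - (10 * (n : ℝ) + 7) * (m : ℝ)
      + (2 * (n : ℝ) + 1)^2))
    (hD : D = 2 * ((m : ℝ) - 1)^2 * (2 * (n : ℝ) - 2 * (m : ℝ) + 1)) :
    ∀ x₁ x₂ c : ℝ, x₁ ≠ 0 → x₂ ≠ 0 →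
      (((1/4) * (((n : ℝ) / ((m : ℝ) - 1)) * x₁^2 - 1)
          = c * (1 - (n : ℝ) / ((m : ℝ) - 1)) * x₁ ∧
        (1/4) * (((m : ℝ) / ((n : ℝ) + 1)) * x₂^2 - 1)
          = c * (1 - (m : ℝ) / ((n : ℝ) + 1)) * x₂ ∧
        ((2 * (m : ℝ) - 1) / (4 * ((m : ℝ) - (n : ℝ) - 1))) * x₁
          - ((2 * (n : ℝ) + 1) / (4 * ((m : ℝ) - (n : ℝ) - 1))) * x₂
          = 2 * c + 1)
      ↔ (c = ((n : ℝ) * x₁^2 - (m : ℝ) + 1) / (4 * ((m : ℝ) - (n : ℝ) - 1) * x₁) ∧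
         x₂ = ((2 * (m : ℝ) - 2 * (n : ℝ) - 1) * x₁^2
            - 4 * ((m : ℝ) - (n : ℝ) - 1) * x₁ + 2 * ((m : ℝ) - 1))
            / ((2 * (n : ℝ) + 1) * x₁) ∧
         (x₁ - 1) * (A * x₁^3 + B * x₁^2 + C * x₁ + D) = 0)) := by
  intro x₁ x₂ c hx₁ _
  have hm1 : (m : ℝ) - 1 ≠ 0 := sub_ne_zero.mpr (by exact_mod_cast (by omega : m ≠ 1))
  have hmn1 : (m : ℝ) - n - 1 ≠ 0 := by
    rw [sub_sub, sub_ne_zero]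
    exact_mod_cast hmn
  have hn1 : (n : ℝ) + 1 ≠ 0 := by positivity
  have h2n1 : 2 * (n : ℝ) + 1 ≠ 0 := by positivity
  subst hA hB hC hD
  rw [eq_div_iff (by simp [hmn1, hx₁]), eq_div_iff (by simp [h2n1, hx₁]),
    ← einstein_quartic_factorization, einstein_eq_one_iff hm1]
  refine and_congr_right fun hc => ?_
  rw [and_comm, einstein_eq_three_iff hmn1 hx₁ hc, einstein_eq_two_iff hn1]
  exact and_congr_right fun hx₂ => einstein_eq_two_iff_quartic h2n1 hx₁ hc hx₂

/-- For m ≥ 2, n ≥ 1, m ≠ n + 1 and x₁ ≠ 0, x₂ ≠ 0, the triple (x₁, x₂, c) solves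
the Einstein system for D(m,n) iff c and x₂ are given by the stated rational
expressions in x₁ and x₁ satisfies (x₁ − 1)(A x₁³ + B x₁² + C x₁ + D) = 0. -/
theorem einstein_Dmn_reduction (m n : ℕ) (hm : 2 ≤ m) (hn : 1 ≤ n) (hmn : m ≠ n + 1)
    (A B C D : ℝ)
    (hA : A = 4 * (m : ℝ)^3 - 4 * (2 * (n : ℝ) + 1) * (m : ℝ)^2
      + (8 * (n : ℝ)^2 + 6 * (n : ℝ) + 1) * (m : ℝ) - (n : ℝ) * (2 * (n : ℝ) + 1)^2)
    (hB : B = -12 * (m : ℝ)^3 + 4 * (6 * (n : ℝ) + 5) * (m : ℝ)^2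
      - (16 * (n : ℝ)^2 + 22 * (n : ℝ) + 7) * (m : ℝ)
      + (n : ℝ) * (4 * (n : ℝ)^2 + 8 * (n : ℝ) + 3))
    (hC : C = 2 * ((m : ℝ) - 1) * (6 * (m : ℝ)^2 - (10 * (n : ℝ) + 7) * (m : ℝ)
      + (2 * (n : ℝ) + 1)^2))
    (hD : D = 2 * ((m : ℝ) - 1)^2 * (2 * (n : ℝ) - 2 * (m : ℝ) + 1)) :
    ∀ x₁ x₂ c : ℝ, x₁ ≠ 0 → x₂ ≠ 0 →
      (((1/4) * (((n : ℝ) / ((m : ℝ) - 1)) * x₁^2 - 1)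
          = c * (1 - (n : ℝ) / ((m : ℝ) - 1)) * x₁ ∧
        (1/4) * (((m : ℝ) / ((n : ℝ) + 1)) * x₂^2 - 1)
          = c * (1 - (m : ℝ) / ((n : ℝ) + 1)) * x₂ ∧
        ((2 * (m : ℝ) - 1) / (4 * ((m : ℝ) - (n : ℝ) - 1))) * x₁
          - ((2 * (n : ℝ) + 1) / (4 * ((m : ℝ) - (n : ℝ) - 1))) * x₂
          = 2 * c + 1)
      ↔ (c = ((n : ℝ) * x₁^2 - (m : ℝ) + 1) / (4 * ((m : ℝ) - (n : ℝ) - 1) * x₁) ∧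
         x₂ = ((2 * (m : ℝ) - 2 * (n : ℝ) - 1) * x₁^2
            - 4 * ((m : ℝ) - (n : ℝ) - 1) * x₁ + 2 * ((m : ℝ) - 1))
            / ((2 * (n : ℝ) + 1) * x₁) ∧
         (x₁ - 1) * (A * x₁^3 + B * x₁^2 + C * x₁ + D) = 0)) :=
  einstein_Dmn_reduction_general m n hm hmn A B C D hA hB hC hD
end
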